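/- Let S and S′ be disjoint finite subsets of ℕ with S′ > S, both down-admissible for v, such that S is down-admissible for v[S′] (so that S ∪ S′ is down-admissible for v). Then λ_{v, S ∪ S′} = λ_{v[S′], S} · λ_{v, S′}. -/

import Mathlib

namespace SL2Tilt

/-- The `i`-th `p`-adic digit of `v`. -/
def dig (p v i : ℕ) : ℕ := v / p ^ i % p

/-- A stretch: a nonempty finite set of consecutive integers. -/
def IsStretch (S : Finset ℕ) : Prop :=
  S.Nonempty ∧ ∀ a ∈ S, ∀ b ∈ S, ∀ c, a ≤ c → c ≤ b → c ∈ S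

/-- `S` is down-admissible for `v` (with respect to the prime `p`):
(d1) the digit of `v` at the minimum of each maximal stretch of `S` is nonzero, and
(d2) if `s ∈ S` and the `(s+1)`-st digit is `0`, then `s + 1 ∈ S`. -/
def DownAdm (p v : ℕ) (S : Finset ℕ) : Prop :=
  (∀ s ∈ S, (s = 0 ∨ s - 1 ∉ S) → dig p v s ≠ 0) ∧
  (∀ s ∈ S, dig p v (s + 1) = 0 → s + 1 ∈ S)

/-- `S` is up-admissible for `v` (with respect to the prime `p`):
(u1) the digit of `v` at the minimum of each maximal stretch of `S` is nonzero, and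
(u2) if `s ∈ S` and the `(s+1)`-st digit is `p - 1`, then `s + 1 ∈ S`. -/
def UpAdm (p v : ℕ) (S : Finset ℕ) : Prop :=
  (∀ s ∈ S, (s = 0 ∨ s - 1 ∉ S) → dig p v s ≠ 0) ∧
  (∀ s ∈ S, dig p v (s + 1) = p - 1 → s + 1 ∈ S)

/-- `v[S] = ∑ᵢ εᵢ aᵢ pⁱ` (εᵢ = -1 for i ∈ S, else 1), as an integer.
All nonzero digits of `v` have index `< v`, so the range `Finset.range v ∪ S` suffices. -/
def vdown (p v : ℕ) (S : Finset ℕ) : ℤ :=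
  ∑ i ∈ Finset.range v ∪ S,
    (if i ∈ S then (-1 : ℤ) else 1) * (dig p v i : ℤ) * (p : ℤ) ^ i

/-- `v(S) = ∑ᵢ aᵢ' pⁱ` where `aᵢ' = -aᵢ` if `i ∈ S`, `aᵢ' = aᵢ + 2` if `i ∉ S` and
`i - 1 ∈ S`, and `aᵢ' = aᵢ` otherwise; as an integer. -/
def vup (p v : ℕ) (S : Finset ℕ) : ℤ :=
  ∑ i ∈ Finset.range v ∪ S ∪ S.image (· + 1),
    (if i ∈ S then -(dig p v i : ℤ)
      else if i - 1 ∈ S then (dig p v i : ℤ) + 2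
      else (dig p v i : ℤ)) * (p : ℤ) ^ i

/-- `v[S]` as a natural number. -/
def vdownN (p v : ℕ) (S : Finset ℕ) : ℕ := (vdown p v S).toNat

/-- `v(S)` as a natural number. -/
def vupN (p v : ℕ) (S : Finset ℕ) : ℕ := (vup p v S).toNat

/-- `fancest' p v s` is `v` with the `p`-adic digits in positions `< s` set to zero.
This is the ancestor `fancest_{s-1}(v)` of the paper: the youngest ancestor of `v`
whose `(s-1)`-st digit is zero (with `fancest' p v 0 = fancest_{-1}(v) = v`). -/
def fancest' (p v s : ℕ) : ℕ := p ^ s * (v / p ^ s)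

/-- The scalar `λ_{v,S} = ∏_{s ∈ S} (-1)^(a_s p^s) · fancest_{s-1}(v)[S]± / fancest_s(v)[S]±`. -/
def lam (p v : ℕ) (S : Finset ℕ) : ℚ :=
  ∏ s ∈ S,
    (-1 : ℚ) ^ (dig p v s * p ^ s) *
      ((vdown p (fancest' p v s) S : ℚ) / (vdown p (fancest' p v (s + 1)) S : ℚ))

/-- The generation of `v` : the number of (matrilineal) ancestors of `v`, i.e. the
number of nonzero `p`-adic digits of `v` minus one. -/
def gen (p v : ℕ) : ℕ :=
  ((Finset.range v).filter (fun i => dig p v i ≠ 0)).card - 1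

/-- A minimal down-admissible stretch for `v`: a down-admissible stretch, no proper
nonempty subset of which is down-admissible for `v`. -/
def MinDownStretch (p v : ℕ) (S : Finset ℕ) : Prop :=
  DownAdm p v S ∧ IsStretch S ∧ ∀ T ⊂ S, T.Nonempty → ¬ DownAdm p v T

/-- A minimal up-admissible stretch for `v`. -/
def MinUpStretch (p v : ℕ) (S : Finset ℕ) : Prop :=
  UpAdm p v S ∧ IsStretch S ∧ ∀ T ⊂ S, T.Nonempty → ¬ UpAdm p v T

/-- `A` and `B` are distant: `d(A,B) > 1`, i.e. `|a - b| > 1` for all `a ∈ A`, `b ∈ B`. -/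
def Distant (A B : Finset ℕ) : Prop :=
  ∀ a ∈ A, ∀ b ∈ B, a + 1 < b ∨ b + 1 < a

/-! ### Auxiliary lemmas for `stmt10` -/

lemma dig_def (p v i : ℕ) : dig p v i = v / p ^ i % p := rfl

lemma dig_lt {p : ℕ} (hp : 2 ≤ p) (v i : ℕ) : dig p v i < p :=
  Nat.mod_lt _ (by omega)

lemma dig_eq_zero_of_le {p v i : ℕ} (hp : 2 ≤ p) (h : v ≤ i) : dig p v i = 0 := by
  have h1 : v < p ^ i :=
    lt_of_le_of_lt h (lt_of_lt_of_le (Nat.lt_two_pow_self (n := i)) (Nat.pow_le_pow_left hp i))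
  rw [dig_def, Nat.div_eq_of_lt h1, Nat.zero_mod]

lemma mod_pow_succ' {p : ℕ} (hp : 2 ≤ p) (v n : ℕ) :
    v % p ^ (n + 1) = v % p ^ n + dig p v n * p ^ n := by
  have hpn : 0 < p ^ n := pow_pos (by omega) n
  have h1 : v % p ^ n < p ^ n := Nat.mod_lt _ hpn
  have h2 : dig p v n < p := dig_lt hp v n
  have hrep : v = p ^ (n + 1) * (v / p ^ (n + 1)) + (dig p v n * p ^ n + v % p ^ n) := by
    have e1 : p ^ n * (v / p ^ n) + v % p ^ n = v := Nat.div_add_mod v (p ^ n)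
    have e2 : p * (v / p ^ n / p) + v / p ^ n % p = v / p ^ n := Nat.div_add_mod _ p
    have e3 : v / p ^ n / p = v / p ^ (n + 1) := by
      rw [Nat.div_div_eq_div_mul, ← pow_succ]
    rw [dig_def]
    calc v = p ^ n * (v / p ^ n) + v % p ^ n := e1.symm
      _ = p ^ n * (p * (v / p ^ n / p) + v / p ^ n % p) + v % p ^ n := by rw [e2]
      _ = p ^ (n + 1) * (v / p ^ n / p) + (v / p ^ n % p * p ^ n + v % p ^ n) := by ring
      _ = _ := by rw [e3]
  have hlt : dig p v n * p ^ n + v % p ^ n < p ^ (n + 1) := by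
    have hd : dig p v n * p ^ n ≤ (p - 1) * p ^ n :=
      Nat.mul_le_mul_right _ (by omega)
    have hs : p ^ (n + 1) = p * p ^ n := by rw [pow_succ]; ring
    have : (p - 1) * p ^ n + p ^ n = p * p ^ n := by
      have : p - 1 + 1 = p := by omega
      calc (p - 1) * p ^ n + p ^ n = (p - 1 + 1) * p ^ n := by ring
        _ = p * p ^ n := by rw [this]
    omega
  calc v % p ^ (n + 1)
      = (p ^ (n + 1) * (v / p ^ (n + 1)) + (dig p v n * p ^ n + v % p ^ n)) % p ^ (n + 1) := by
        rw [← hrep]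
    _ = (dig p v n * p ^ n + v % p ^ n) % p ^ (n + 1) := by
        rw [Nat.mul_add_mod]
    _ = dig p v n * p ^ n + v % p ^ n := Nat.mod_eq_of_lt hlt
    _ = v % p ^ n + dig p v n * p ^ n := by ring

lemma sum_dig_range {p : ℕ} (hp : 2 ≤ p) (v n : ℕ) :
    ∑ i ∈ Finset.range n, dig p v i * p ^ i = v % p ^ n := by
  induction n with
  | zero => simp [Nat.mod_one]
  | succ n ih => rw [Finset.sum_range_succ, ih, mod_pow_succ' hp]

lemma sum_dig_total {p : ℕ} (hp : 2 ≤ p) (v : ℕ) (T : Finset ℕ) :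
    ∑ i ∈ Finset.range v ∪ T, dig p v i * p ^ i = v := by
  rw [← Finset.sum_subset (Finset.subset_union_left (s₂ := T))]
  · rw [sum_dig_range hp]
    exact Nat.mod_eq_of_lt
      (lt_of_lt_of_le (Nat.lt_two_pow_self (n := v)) (Nat.pow_le_pow_left hp v))
  · intro i _ hi
    have : v ≤ i := by simpa using hi
    rw [dig_eq_zero_of_le hp this, Nat.zero_mul]

lemma sum_dig_total_int {p : ℕ} (hp : 2 ≤ p) (v : ℕ) (T : Finset ℕ) :
    ∑ i ∈ Finset.range v ∪ T, (dig p v i : ℤ) * (p : ℤ) ^ i = (v : ℤ) := by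
  have h := sum_dig_total hp v T
  calc ∑ i ∈ Finset.range v ∪ T, (dig p v i : ℤ) * (p : ℤ) ^ i
      = ((∑ i ∈ Finset.range v ∪ T, dig p v i * p ^ i : ℕ) : ℤ) := by push_cast; rfl
    _ = (v : ℤ) := by rw [h]

lemma vdown_eq {p : ℕ} (hp : 2 ≤ p) (v : ℕ) (T : Finset ℕ) :
    vdown p v T = (v : ℤ) - 2 * ∑ i ∈ T, (dig p v i : ℤ) * (p : ℤ) ^ i := by
  classical
  unfold vdown
  calc ∑ i ∈ Finset.range v ∪ T, (if i ∈ T then (-1 : ℤ) else 1) * (dig p v i : ℤ) * (p : ℤ) ^ i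
      = ∑ i ∈ Finset.range v ∪ T,
          ((dig p v i : ℤ) * (p : ℤ) ^ i
            - (if i ∈ T then 2 * ((dig p v i : ℤ) * (p : ℤ) ^ i) else 0)) := by
        refine Finset.sum_congr rfl fun i _ => ?_
        split <;> ring
    _ = (∑ i ∈ Finset.range v ∪ T, (dig p v i : ℤ) * (p : ℤ) ^ i)
          - ∑ i ∈ Finset.range v ∪ T,
              (if i ∈ T then 2 * ((dig p v i : ℤ) * (p : ℤ) ^ i) else 0) :=
        Finset.sum_sub_distrib _ _
    _ = (v : ℤ) - ∑ i ∈ T, 2 * ((dig p v i : ℤ) * (p : ℤ) ^ i) := by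
        rw [sum_dig_total_int hp, Finset.sum_ite_mem, Finset.union_inter_cancel_right]
    _ = (v : ℤ) - 2 * ∑ i ∈ T, (dig p v i : ℤ) * (p : ℤ) ^ i := by
        rw [Finset.mul_sum]

lemma dig_fancest {p : ℕ} (hp : 2 ≤ p) (v t i : ℕ) :
    dig p (fancest' p v t) i = if t ≤ i then dig p v i else 0 := by
  have hpt : 0 < p ^ t := pow_pos (by omega) t
  unfold fancest'
  split
  · rename_i h
    have he : p ^ i = p ^ t * p ^ (i - t) := by
      rw [← pow_add]; congr 1; omega
    rw [dig_def, dig_def, he, ← Nat.div_div_eq_div_mul, Nat.mul_div_cancel_left _ hpt,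
      Nat.div_div_eq_div_mul, ← he]
  · rename_i h
    have he : p ^ t = p ^ i * (p * p ^ (t - i - 1)) := by
      rw [← pow_succ']
      rw [← pow_add]; congr 1; omega
    rw [dig_def, he, mul_assoc, Nat.mul_div_cancel_left _ (pow_pos (by omega) i)]
    rw [mul_assoc, Nat.mul_mod_right]

lemma fancest_cast (p v t : ℕ) :
    (fancest' p v t : ℤ) = (v : ℤ) - ((v % p ^ t : ℕ) : ℤ) := by
  have h := Nat.div_add_mod v (p ^ t)
  unfold fancest'
  have h2 : ((p ^ t * (v / p ^ t) : ℕ) : ℤ) + ((v % p ^ t : ℕ) : ℤ) = (v : ℤ) := by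
    exact_mod_cast congrArg (fun n : ℕ => (n : ℤ)) h
  linarith

lemma vdown_fancest {p : ℕ} (hp : 2 ≤ p) (v t : ℕ) (T : Finset ℕ) :
    vdown p (fancest' p v t) T
      = (v : ℤ) - ((v % p ^ t : ℕ) : ℤ)
        - 2 * ∑ i ∈ T.filter (t ≤ ·), (dig p v i : ℤ) * (p : ℤ) ^ i := by
  classical
  rw [vdown_eq hp, fancest_cast]
  have hsum : ∑ i ∈ T, (dig p (fancest' p v t) i : ℤ) * (p : ℤ) ^ i
      = ∑ i ∈ T.filter (t ≤ ·), (dig p v i : ℤ) * (p : ℤ) ^ i := by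
    rw [Finset.sum_filter]
    refine Finset.sum_congr rfl fun i _ => ?_
    rw [dig_fancest hp]
    split <;> simp
  rw [hsum]

lemma geom_aux {p : ℕ} (hp : 2 ≤ p) : ∀ n, ∑ i ∈ Finset.range n, (p - 1) * p ^ i = p ^ n - 1 := by
  intro n
  induction n with
  | zero => simp
  | succ n ih =>
    rw [Finset.sum_range_succ, ih]
    have h1 : 1 ≤ p ^ n := Nat.one_le_pow n p (by omega)
    have h2 : p ^ (n + 1) = p * p ^ n := by rw [pow_succ]; ring
    have h3 : (p - 1) * p ^ n + p ^ n = p * p ^ n := by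
      have hh : p - 1 + 1 = p := by omega
      calc (p - 1) * p ^ n + p ^ n = (p - 1 + 1) * p ^ n := by ring
        _ = p * p ^ n := by rw [hh]
    omega

/-- Positivity of `v[S]` (in the weak form `2·∑ ≤ v`), using only condition (d2). -/
lemma two_mul_sum_le {p v : ℕ} (hp : 2 ≤ p) (S : Finset ℕ)
    (hd2 : ∀ s ∈ S, dig p v (s + 1) = 0 → s + 1 ∈ S) :
    2 * ∑ i ∈ S, dig p v i * p ^ i ≤ v := by
  classical
  have hex : ∀ i : ℕ, ∃ j, i < j ∧ j ∉ S := by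
    intro i
    refine ⟨max i (S.sup id) + 1, by omega, fun hmem => ?_⟩
    have h := Finset.le_sup (f := id) hmem
    simp only [id] at h
    omega
  set g : ℕ → ℕ := fun i => Nat.find (hex i) with hg
  have hg_gt : ∀ i, i < g i := fun i => (Nat.find_spec (hex i)).1
  have hg_not : ∀ i, g i ∉ S := fun i => (Nat.find_spec (hex i)).2
  have hg_min : ∀ i j, i < j → j < g i → j ∈ S := by
    intro i j h1 h2
    by_contra hj
    exact (Nat.find_min (hex i) h2) ⟨h1, hj⟩
  have hdig : ∀ i ∈ S, dig p v (g i) ≠ 0 := by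
    intro i hi h0
    have hg1 : 1 ≤ g i := by have := hg_gt i; omega
    have hpred : g i - 1 ∈ S := by
      rcases Nat.lt_or_ge (i + 1) (g i) with h | h
      · exact hg_min i (g i - 1) (by have := hg_gt i; omega) (by omega)
      · have hgi : g i = i + 1 := by have := hg_gt i; omega
        have : g i - 1 = i := by omega
        rw [this]; exact hi
    have h2 := hd2 _ hpred (by rwa [Nat.sub_add_cancel hg1])
    rw [Nat.sub_add_cancel hg1] at h2
    exact hg_not i h2
  have hdisj : Disjoint S (S.image g) := by
    rw [Finset.disjoint_right]
    intro j hj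
    obtain ⟨i, _, rfl⟩ := Finset.mem_image.1 hj
    exact hg_not i
  have hv : ∑ i ∈ S, dig p v i * p ^ i + ∑ j ∈ S.image g, dig p v j * p ^ j ≤ v := by
    calc ∑ i ∈ S, dig p v i * p ^ i + ∑ j ∈ S.image g, dig p v j * p ^ j
        = ∑ i ∈ S ∪ S.image g, dig p v i * p ^ i := (Finset.sum_union hdisj).symm
      _ ≤ ∑ i ∈ Finset.range v ∪ (S ∪ S.image g), dig p v i * p ^ i :=
          Finset.sum_le_sum_of_subset Finset.subset_union_right
      _ = v := sum_dig_total hp v _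
  have hbound : ∑ i ∈ S, dig p v i * p ^ i ≤ ∑ j ∈ S.image g, dig p v j * p ^ j := by
    rw [← Finset.sum_fiberwise_of_maps_to (g := g)
      (fun i hi => Finset.mem_image_of_mem g hi) (fun i => dig p v i * p ^ i)]
    refine Finset.sum_le_sum fun j hj => ?_
    obtain ⟨i0, hi0, rfl⟩ := Finset.mem_image.1 hj
    have hfib : S.filter (fun i => g i = g i0) ⊆ Finset.range (g i0) := by
      intro x hx
      rw [Finset.mem_filter] at hx
      exact Finset.mem_range.2 (hx.2 ▸ hg_gt x)
    have h1 : 1 ≤ dig p v (g i0) := Nat.pos_of_ne_zero (hdig i0 hi0)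
    calc ∑ i ∈ S.filter (fun i => g i = g i0), dig p v i * p ^ i
        ≤ ∑ i ∈ Finset.range (g i0), dig p v i * p ^ i :=
          Finset.sum_le_sum_of_subset hfib
      _ ≤ ∑ i ∈ Finset.range (g i0), (p - 1) * p ^ i :=
          Finset.sum_le_sum (fun i _ => Nat.mul_le_mul_right _
            (by have := dig_lt hp v i; omega))
      _ = p ^ (g i0) - 1 := geom_aux hp _
      _ ≤ dig p v (g i0) * p ^ (g i0) := by
          have := Nat.le_mul_of_pos_left (p ^ (g i0)) (h1.trans_eq rfl)
          have h2 : p ^ (g i0) ≤ dig p v (g i0) * p ^ (g i0) :=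
            Nat.le_mul_of_pos_left _ h1
          omega
  omega

/-- If `S' > S` are disjoint, both down-admissible for `v`, and `S` is down-admissible
for `v[S']`, then `λ_{v, S ∪ S'} = λ_{v[S'], S} · λ_{v, S'}`. -/
theorem stmt10 (p v : ℕ) (hp : p.Prime) (hv : 1 ≤ v) (S S' : Finset ℕ)
    (hdisj : Disjoint S S') (hlt : ∀ a ∈ S, ∀ b ∈ S', a < b)
    (hS : DownAdm p v S) (hS' : DownAdm p v S')
    (hS2 : DownAdm p (vdownN p v S') S) :
    lam p v (S ∪ S') = lam p (vdownN p v S') S * lam p v S' := by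
  classical
  have hp2 : 2 ≤ p := hp.two_le
  set w := vdownN p v S' with hw
  have hpos : 0 ≤ vdown p v S' := by
    rw [vdown_eq hp2]
    have h := two_mul_sum_le (v := v) hp2 S' hS'.2
    have hc : 2 * ∑ i ∈ S', (dig p v i : ℤ) * (p : ℤ) ^ i
        = ((2 * ∑ i ∈ S', dig p v i * p ^ i : ℕ) : ℤ) := by push_cast; rfl
    rw [hc]
    have : ((2 * ∑ i ∈ S', dig p v i * p ^ i : ℕ) : ℤ) ≤ (v : ℤ) := by exact_mod_cast h
    linarith
  have hwz : (w : ℤ) = (v : ℤ) - 2 * ∑ i ∈ S', (dig p v i : ℤ) * (p : ℤ) ^ i := by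
    rw [hw, vdownN, Int.toNat_of_nonneg hpos, vdown_eq hp2]
  have hmod : ∀ t, (∀ b ∈ S', t ≤ b) → w % p ^ t = v % p ^ t := by
    intro t ht
    have hdvd : ((p : ℤ) ^ t) ∣ 2 * ∑ i ∈ S', (dig p v i : ℤ) * (p : ℤ) ^ i := by
      refine Dvd.dvd.mul_left ?_ 2
      refine Finset.dvd_sum fun i hi => ?_
      exact Dvd.dvd.mul_left (pow_dvd_pow _ (ht i hi)) _
    have hz : (w : ℤ) % (p : ℤ) ^ t = (v : ℤ) % (p : ℤ) ^ t := by
      rw [hwz]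
      obtain ⟨c, hc⟩ := hdvd
      rw [hc]
      rw [sub_eq_add_neg, neg_mul_eq_mul_neg]
      exact Int.add_mul_emod_self_left (v:ℤ) ((p:ℤ)^t) (-c)
    have : ((w % p ^ t : ℕ) : ℤ) = ((v % p ^ t : ℕ) : ℤ) := by push_cast; exact hz
    exact_mod_cast this
  have hdigw : ∀ i, (∀ b ∈ S', i < b) → dig p w i = dig p v i := by
    intro i hib
    have hm := hmod (i + 1) (fun b hb => hib b hb)
    have key : ∀ u : ℕ, dig p u i = u % p ^ (i + 1) / p ^ i := by
      intro u
      rw [dig_def, pow_succ, Nat.mod_mul_right_div_self]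
    rw [key, key, hm]
  have hkey : ∀ t, (∀ b ∈ S', t ≤ b) →
      vdown p (fancest' p v t) (S ∪ S') = vdown p (fancest' p w t) S := by
    intro t ht
    rw [vdown_fancest hp2, vdown_fancest hp2, hmod t ht, hwz]
    have hfilter : (S ∪ S').filter (t ≤ ·) = S.filter (t ≤ ·) ∪ S' := by
      rw [Finset.filter_union, Finset.filter_true_of_mem (fun b hb => ht b hb)]
    have hdisj2 : Disjoint (S.filter (t ≤ ·)) S' :=
      Finset.disjoint_of_subset_left (Finset.filter_subset _ _) hdisj
    rw [hfilter, Finset.sum_union hdisj2]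
    have hsw : ∑ i ∈ S.filter (t ≤ ·), (dig p w i : ℤ) * (p : ℤ) ^ i
        = ∑ i ∈ S.filter (t ≤ ·), (dig p v i : ℤ) * (p : ℤ) ^ i := by
      refine Finset.sum_congr rfl fun i hi => ?_
      rw [hdigw i (fun b hb => hlt i (Finset.mem_filter.1 hi).1 b hb)]
    rw [hsw]
    ring
  have hkey' : ∀ t, (∀ a ∈ S, a < t) →
      vdown p (fancest' p v t) (S ∪ S') = vdown p (fancest' p v t) S' := by
    intro t ht
    rw [vdown_fancest hp2, vdown_fancest hp2]
    have hfilter : (S ∪ S').filter (t ≤ ·) = S'.filter (t ≤ ·) := by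
      rw [Finset.filter_union, Finset.filter_false_of_mem
        (fun a ha => by have := ht a ha; omega), Finset.empty_union]
    rw [hfilter]
  simp only [lam]
  rw [Finset.prod_union hdisj]
  congr 1
  · refine Finset.prod_congr rfl fun s hs => ?_
    have h1 : dig p w s = dig p v s := hdigw s (fun b hb => hlt s hs b hb)
    rw [h1, hkey s (fun b hb => le_of_lt (hlt s hs b hb)),
      hkey (s + 1) (fun b hb => hlt s hs b hb)]
  · refine Finset.prod_congr rfl fun s hs => ?_
    rw [hkey' s (fun a ha => hlt a ha s hs),
      hkey' (s + 1) (fun a ha => by have := hlt a ha s hs; omega)]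

end SL2Tilt
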